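/- If G is a graph on n vertices with no copy of C_{2k+1} (k ≥ 2 fixed), then the number of triangles in G is at most (2(k-1)/3)·|E(G)|. -/

import Mathlib

/-!
For a vertex `v`, a path on `2k` vertices inside the neighbourhood `N(v)` closes through `v`
into a `C_{2k+1}`. By the Erdős–Gallai theorem `N(v)` therefore spans at most `(k-1)·deg v`
edges, and these edges are exactly the triangles through `v`. Summing over `v` counts every
triangle three times, while `∑ deg v = 2|E|`.

Erdős–Gallai (if every path in `s` has at most `m` vertices, then `s` spans at most
`(m-1)/2·|s|` edges) goes by induction on `s`. A vertex of degree `< m/2` in `s` can be deleted.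
Otherwise Pósa's rotation closes a longest path into a cycle; maximality then forces the vertex
set of this cycle to be a union of components of `s` with at most `m` vertices, which is split
off.
-/

open Finset

theorem List.cycleChain_cons_append_reverse {α : Type*} {R : α → α → Prop} [Std.Symm R]
    {a : α} {l₁ l₂ : List α} (h : (a :: (l₁ ++ l₂)).IsChain R) (hl₂ : l₂ ≠ [])
    (hhead : R a (l₂.head hl₂))
    (hlast : R ((a :: l₁).getLast (cons_ne_nil a l₁)) (l₂.getLast hl₂)) :
    Cycle.Chain R ↑(a :: (l₁ ++ l₂.reverse)) := by
  rw [Cycle.chain_coe_cons]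
  have h' : ((a :: l₁) ++ l₂).IsChain R := h
  have hrev : a :: (l₁ ++ l₂.reverse ++ [a]) = (a :: l₁) ++ (a :: l₂).reverse := by simp
  rw [hrev, List.isChain_append, List.isChain_reverse]
  refine ⟨h'.left_of_append, ?_, ?_⟩
  · obtain ⟨b, l₂, rfl⟩ := List.exists_cons_of_ne_nil hl₂
    exact List.isChain_cons_cons.2 ⟨symm hhead, h'.right_of_append.imp fun _ _ h => symm h⟩
  · simp only [List.getLast?_eq_some_getLast (cons_ne_nil a l₁), List.head?_reverse,
      List.getLast?_cons, Option.mem_def, Option.some.injEq]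
    rintro _ rfl _ rfl
    simpa [List.getLast?_eq_some_getLast hl₂] using hlast

theorem Cycle.Chain.exists_isChain_cons_perm {α : Type*} {R : α → α → Prop} {c : List α}
    (hc : Cycle.Chain R c) {y : α} (hy : y ∈ c) :
    ∃ l, (y :: l).Perm c ∧ (y :: l).IsChain R := by
  obtain ⟨c₁, c₂, rfl⟩ := List.append_of_mem hy
  have hrot : (↑(c₁ ++ y :: c₂) : Cycle α) = ↑(y :: (c₂ ++ c₁)) :=
    Cycle.coe_eq_coe.2 List.isRotated_append
  rw [hrot, Cycle.chain_coe_cons, ← List.cons_append] at hc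
  exact ⟨c₂ ++ c₁, List.perm_append_comm (l₁ := y :: c₂), hc.left_of_append⟩

namespace SimpleGraph

variable {V : Type*} {G : SimpleGraph V}

/-- A path of `G` inside `s`, as its list of vertices; `l.length` counts vertices, not edges. -/
structure IsPathIn (G : SimpleGraph V) (s : Finset V) (l : List V) : Prop where
  isChain : l.IsChain G.Adj
  nodup : l.Nodup
  subset : ∀ x ∈ l, x ∈ s

namespace IsPathIn

variable {s t : Finset V} {l : List V}

lemma mono (hl : G.IsPathIn s l) (hst : s ⊆ t) : G.IsPathIn t l :=
  ⟨hl.isChain, hl.nodup, fun x hx => hst (hl.subset x hx)⟩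

lemma reverse (hl : G.IsPathIn s l) : G.IsPathIn s l.reverse :=
  ⟨List.isChain_reverse.2 (hl.isChain.imp fun _ _ h => h.symm), List.nodup_reverse.2 hl.nodup,
    fun x hx => hl.subset x (List.mem_reverse.1 hx)⟩

lemma take (hl : G.IsPathIn s l) (n : ℕ) : G.IsPathIn s (l.take n) :=
  ⟨hl.isChain.take n, hl.nodup.sublist (List.take_sublist n l),
    fun x hx => hl.subset x (List.mem_of_mem_take hx)⟩

lemma cons {x y : V} (hl : G.IsPathIn s (y :: l)) (hx : x ∈ s) (hxl : x ∉ y :: l)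
    (hxy : G.Adj x y) : G.IsPathIn s (x :: y :: l) :=
  ⟨List.isChain_cons_cons.2 ⟨hxy, hl.isChain⟩, List.nodup_cons.2 ⟨hxl, hl.nodup⟩,
    by simpa [hx] using hl.subset⟩

lemma mem_of_adj_head (hl : G.IsPathIn s l) (hne : l ≠ [])
    (hmax : ∀ l', G.IsPathIn s l' → l'.length ≤ l.length) {w : V} (hw : w ∈ s)
    (hadj : G.Adj (l.head hne) w) : w ∈ l := by
  by_contra hwl
  obtain ⟨a, l, rfl⟩ := List.exists_cons_of_ne_nil hne
  simpa using hmax _ (hl.cons hw hwl hadj.symm)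

lemma mem_of_adj_getLast (hl : G.IsPathIn s l) (hne : l ≠ [])
    (hmax : ∀ l', G.IsPathIn s l' → l'.length ≤ l.length) {w : V} (hw : w ∈ s)
    (hadj : G.Adj (l.getLast hne) w) : w ∈ l := by
  simpa using hl.reverse.mem_of_adj_head (by simpa) (by simpa using hmax) hw (by simpa using hadj)

end IsPathIn

lemma exists_isPathIn_forall_length_le {s : Finset V} {m : ℕ} (hs : s.Nonempty)
    (hpath : ∀ l, G.IsPathIn s l → l.length ≤ m) :
    ∃ l, G.IsPathIn s l ∧ l ≠ [] ∧ ∀ l', G.IsPathIn s l' → l'.length ≤ l.length := by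
  obtain ⟨v, hv⟩ := hs
  set lengths := {j | ∃ l, G.IsPathIn s l ∧ l.length = j}
  have hbdd : BddAbove lengths := ⟨m, by rintro _ ⟨l, hl, rfl⟩; exact hpath l hl⟩
  have hv' : G.IsPathIn s [v] := ⟨List.isChain_singleton v, List.nodup_singleton v, by simpa⟩
  obtain ⟨l, hl, hlen⟩ := Nat.sSup_mem (s := lengths) ⟨1, [v], hv', rfl⟩ hbdd
  have hmax : ∀ l', G.IsPathIn s l' → l'.length ≤ l.length :=
    fun l' hl' => hlen ▸ le_csSup hbdd ⟨l', hl', rfl⟩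
  refine ⟨l, hl, ?_, hmax⟩
  rintro rfl
  simpa using hmax _ hv'

theorem cycleGraph_isContained_of_adj_head_getLast {v : V} {l : List V} (hl : l.IsChain G.Adj)
    (hnd : l.Nodup) (hvl : v ∉ l) (hne : l ≠ []) (hlen : 2 ≤ l.length)
    (hhead : G.Adj v (l.head hne)) (hlast : G.Adj (l.getLast hne) v) :
    cycleGraph (l.length + 1) ⊑ G := by
  let p := (Walk.ofSupport l hne hl).concat hlast
  have hp : p.IsPath := by
    rw [Walk.isPath_def, Walk.support_concat, Walk.support_ofSupport]
    exact List.nodup_append.2 ⟨hnd, List.nodup_singleton v,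
      fun a ha b hb => by rw [List.mem_singleton.1 hb]; rintro rfl; exact hvl ha⟩
  have hplen : (Walk.cons hhead p).length = l.length + 1 := by
    simp only [p, Walk.length_cons, Walk.length_concat, Walk.length_ofSupport]
    omega
  have hcyc : (Walk.cons hhead p).IsCycle :=
    Walk.isCycle_iff_isPath_tail_and_le_length.2 ⟨by simpa using hp, by omega⟩
  exact (cycleGraph_isContained_iff (by omega)).2 ⟨v, _, hcyc, hplen⟩

theorem length_lt_of_isPathIn_neighborFinset {v : V} [Fintype (G.neighborSet v)] {m : ℕ}
    (hm : 2 ≤ m) (hfree : ¬ cycleGraph (m + 1) ⊑ G) {l : List V}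
    (hl : G.IsPathIn (G.neighborFinset v) l) : l.length < m := by
  by_contra! hlen
  have hl' := hl.take m
  have hlen' : (l.take m).length = m := by rw [List.length_take]; omega
  have hne : l.take m ≠ [] := List.ne_nil_of_length_pos (by omega)
  have hadj : ∀ x ∈ l.take m, G.Adj v x :=
    fun x hx => (G.mem_neighborFinset v x).1 (hl'.subset x hx)
  exact hfree (hlen' ▸ cycleGraph_isContained_of_adj_head_getLast hl'.isChain hl'.nodup
    (fun h => G.irrefl (hadj v h)) hne (by omega) (hadj _ (List.head_mem hne))
    (hadj _ (List.getLast_mem hne)).symm)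

section DecidableRel

variable [DecidableRel G.Adj]

lemma card_interedges_eq_sum (s t : Finset V) :
    #(G.interedges s t) = ∑ u ∈ s, #{w ∈ t | G.Adj u w} := by
  rw [interedges_def, card_filter, sum_product]
  simp only [card_filter]

lemma card_interedges_comm (s t : Finset V) : #(G.interedges s t) = #(G.interedges t s) :=
  have := G.symm
  Rel.card_interedges_comm s t

lemma card_interedges_self_le (s : Finset V) : #(G.interedges s s) ≤ (#s - 1) * #s := by
  rw [Nat.sub_one_mul, ← offDiag_card]
  refine card_le_card fun x hx => ?_
  obtain ⟨hx₁, hx₂, hadj⟩ := G.mem_interedges_iff.1 hx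
  exact mem_offDiag.2 ⟨hx₁, hx₂, hadj.ne⟩

variable [DecidableEq V]

lemma card_interedges_union_left {s₁ s₂ : Finset V} (h : Disjoint s₁ s₂) (t : Finset V) :
    #(G.interedges (s₁ ∪ s₂) t) = #(G.interedges s₁ t) + #(G.interedges s₂ t) := by
  rw [← card_union_of_disjoint (G.interedges_disjoint_left h t)]
  congr 1
  ext
  simp only [mem_union, mem_interedges_iff]
  tauto

lemma card_interedges_union_right (s : Finset V) {t₁ t₂ : Finset V} (h : Disjoint t₁ t₂) :
    #(G.interedges s (t₁ ∪ t₂)) = #(G.interedges s t₁) + #(G.interedges s t₂) := by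
  rw [card_interedges_comm, card_interedges_union_left h, card_interedges_comm,
    card_interedges_comm t₂]

lemma card_interedges_self_eq_of_subset {a s : Finset V} (ha : a ⊆ s) :
    #(G.interedges s s) = #(G.interedges a a) + #(G.interedges (s \ a) (s \ a)) +
      2 * #(G.interedges a (s \ a)) := by
  conv_lhs => rw [← union_sdiff_of_subset ha]
  rw [card_interedges_union_left disjoint_sdiff, card_interedges_union_right _ disjoint_sdiff,
    card_interedges_union_right _ disjoint_sdiff, card_interedges_comm (s \ a) a]
  ring

lemma card_interedges_self_eq_of_closed {a s : Finset V} (ha : a ⊆ s)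
    (hcl : ∀ u ∈ a, ∀ w ∈ s, G.Adj u w → w ∈ a) :
    #(G.interedges s s) = #(G.interedges a a) + #(G.interedges (s \ a) (s \ a)) := by
  have : G.interedges a (s \ a) = ∅ := eq_empty_of_forall_notMem fun ⟨u, w⟩ h => by
    obtain ⟨hu, hw, huw⟩ := G.mem_interedges_iff.1 h
    exact (mem_sdiff.1 hw).2 (hcl u hu w (mem_sdiff.1 hw).1 huw)
  rw [card_interedges_self_eq_of_subset ha, this, card_empty, mul_zero, add_zero]

lemma card_interedges_self_erase {s : Finset V} {v : V} (hv : v ∈ s) :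
    #(G.interedges s s) =
      #(G.interedges (s.erase v) (s.erase v)) + 2 * #{w ∈ s | G.Adj v w} := by
  rw [card_interedges_self_eq_of_subset (singleton_subset_iff.2 hv), sdiff_singleton_eq_erase,
    card_interedges_eq_sum {v}, card_interedges_eq_sum {v}, sum_singleton, sum_singleton,
    filter_erase, erase_eq_of_notMem (fun h => G.irrefl (mem_filter.1 h).2)]
  simp

/-- Pósa's rotation. With `z` the last vertex, the indices `i` with `a ~ l[i]` and those with
`z ~ (a :: l)[i]` cannot be disjoint; at a common one, reversing the path after position `i`
closes it up. -/
theorem exists_perm_cycleChain {a : V} {l : List V} (hl : (a :: l).IsChain G.Adj)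
    (hdeg : l.length < #{w ∈ (a :: l).toFinset | G.Adj a w} +
      #{w ∈ (a :: l).toFinset | G.Adj ((a :: l).getLast (List.cons_ne_nil a l)) w}) :
    ∃ c : List V, c.Perm (a :: l) ∧ Cycle.Chain G.Adj c := by
  set z := (a :: l).getLast (List.cons_ne_nil a l)
  let A : Finset (Fin l.length) := {i | G.Adj a l[i]}
  let B : Finset (Fin l.length) := {i | G.Adj z (a :: l)[i.1]}
  have hA : #{w ∈ (a :: l).toFinset | G.Adj a w} ≤ #A := by
    refine (card_le_card fun w hw => ?_).trans (card_image_le (f := fun i => l[i]))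
    obtain ⟨hw, haw⟩ := mem_filter.1 hw
    obtain rfl | hw := List.mem_cons.1 (List.mem_toFinset.1 hw)
    · exact absurd haw (G.irrefl)
    obtain ⟨i, rfl⟩ := List.mem_iff_get.1 hw
    exact mem_image.2 ⟨i, by simpa [A] using haw, rfl⟩
  have hB : #{w ∈ (a :: l).toFinset | G.Adj z w} ≤ #B := by
    refine (card_le_card fun w hw => ?_).trans (card_image_le (f := fun i => (a :: l)[i.1]))
    obtain ⟨hw, hzw⟩ := mem_filter.1 hw
    obtain ⟨j, rfl⟩ := List.mem_iff_get.1 (List.mem_toFinset.1 hw)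
    have hj : j.1 < l.length := by
      by_contra! hj
      have : (a :: l).get j = z := by
        simp only [z, List.get_eq_getElem, List.getLast_eq_getElem]
        congr 1
        have := j.2
        simp only [List.length_cons] at this ⊢
        omega
      exact G.irrefl (this ▸ hzw)
    exact mem_image.2 ⟨⟨j, hj⟩, by simpa [B] using hzw, rfl⟩
  obtain ⟨i, hi⟩ := inter_nonempty_of_card_lt_card_add_card (subset_univ A) (subset_univ B)
    (by simpa using hdeg.trans_le (add_le_add hA hB))
  simp only [mem_inter, mem_filter, mem_univ, true_and, A, B] at hi
  have hne : l.drop i ≠ [] := by simp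
  refine ⟨a :: (l.take i ++ (l.drop i).reverse), ?_, ?_⟩
  · refine List.Perm.cons a ?_
    calc (l.take i ++ (l.drop i).reverse).Perm (l.take i ++ l.drop i) :=
          (List.reverse_perm _).append_left _
      _ = l := List.take_append_drop _ _
  · have : Std.Symm G.Adj := G.symm
    refine List.cycleChain_cons_append_reverse (by rwa [List.take_append_drop]) hne
      (by simpa [List.head_drop] using hi.1) ?_
    have hlast : (a :: l.take i).getLast (List.cons_ne_nil _ _) = (a :: l)[i.1] := by
      have := i.2
      simp [List.getLast_eq_getElem, List.getElem_cons]
    have hl_ne : l ≠ [] := List.ne_nil_of_length_pos (Nat.zero_lt_of_lt i.2)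
    rw [hlast, List.getLast_drop, ← List.getLast_cons hl_ne]
    exact hi.2.symm

/-- The vertex set of a longest path closes into a cycle, so no other vertex of `s` is adjacent
to it. -/
theorem exists_closed_subset_card_le {s : Finset V} {m : ℕ} (hs : s.Nonempty)
    (hpath : ∀ l, G.IsPathIn s l → l.length ≤ m)
    (hdeg : ∀ v ∈ s, m ≤ 2 * #{w ∈ s | G.Adj v w}) :
    ∃ L ⊆ s, L.Nonempty ∧ #L ≤ m ∧ ∀ u ∈ L, ∀ w ∈ s, G.Adj u w → w ∈ L := by
  obtain ⟨l, hl, hne, hmax⟩ := exists_isPathIn_forall_length_le hs hpath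
  have hdeg_l : ∀ v, (∀ w ∈ s, G.Adj v w → w ∈ l) →
      #{w ∈ s | G.Adj v w} ≤ #{w ∈ l.toFinset | G.Adj v w} := fun v hv =>
    card_le_card fun w hw => by
      obtain ⟨hw, hvw⟩ := mem_filter.1 hw
      exact mem_filter.2 ⟨List.mem_toFinset.2 (hv w hw hvw), hvw⟩
  have hlen := hpath l hl
  obtain ⟨a, l', rfl⟩ := List.exists_cons_of_ne_nil hne
  set z := (a :: l').getLast hne
  have hhead := hdeg_l a fun w => hl.mem_of_adj_head hne hmax
  have hlast := hdeg_l z fun w => hl.mem_of_adj_getLast hne hmax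
  have := hdeg a (hl.subset a List.mem_cons_self)
  have := hdeg z (hl.subset z (List.getLast_mem hne))
  obtain ⟨c, hcl, hc⟩ := exists_perm_cycleChain hl.isChain
    (show _ < _ + #{w ∈ _ | G.Adj z w} by rw [List.length_cons] at hlen; omega)
  refine ⟨(a :: l').toFinset, fun x hx => hl.subset x (List.mem_toFinset.1 hx), ⟨a, by simp⟩,
    (List.toFinset_card_of_nodup hl.nodup).trans_le hlen, fun u hu w hw huw => ?_⟩
  by_contra hwl
  obtain ⟨r, hrc, hr⟩ := hc.exists_isChain_cons_perm (hcl.mem_iff.2 (List.mem_toFinset.1 hu))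
  have hperm := hrc.trans hcl
  have hur : G.IsPathIn s (u :: r) :=
    ⟨hr, hperm.nodup_iff.2 hl.nodup, fun x hx => hl.subset x (hperm.mem_iff.1 hx)⟩
  have := hmax _ (hur.cons hw (fun h => hwl (List.mem_toFinset.2 (hperm.mem_iff.1 h))) huw.symm)
  simp [hperm.length_eq] at this

/-- Erdős–Gallai; `#(G.interedges s s)` counts every edge inside `s` twice. -/
theorem card_interedges_le_of_forall_isPathIn {m : ℕ} (s : Finset V)
    (hpath : ∀ l, G.IsPathIn s l → l.length ≤ m) : #(G.interedges s s) ≤ (m - 1) * #s := by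
  induction s using Finset.strongInduction with
  | H s ih =>
  by_cases hlow : ∃ v ∈ s, 2 * #{w ∈ s | G.Adj v w} < m
  · obtain ⟨v, hv, hvm⟩ := hlow
    have hrec := ih (s.erase v) (erase_ssubset hv) fun l hl => hpath l (hl.mono (erase_subset v s))
    rw [card_erase_of_mem hv] at hrec
    rw [card_interedges_self_erase hv]
    calc _ ≤ (m - 1) * (#s - 1) + (m - 1) := by omega
      _ = (m - 1) * #s := by rw [← Nat.mul_add_one, Nat.sub_add_cancel (card_pos.2 ⟨v, hv⟩)]
  · push Not at hlow
    obtain rfl | hs := s.eq_empty_or_nonempty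
    · simp
    obtain ⟨L, hLs, hLne, hLm, hLcl⟩ := exists_closed_subset_card_le hs hpath hlow
    have hrec := ih (s \ L) (sdiff_ssubset hLs hLne) fun l hl => hpath l (hl.mono sdiff_subset)
    calc #(G.interedges s s) = #(G.interedges L L) + #(G.interedges (s \ L) (s \ L)) :=
          card_interedges_self_eq_of_closed hLs hLcl
      _ ≤ (m - 1) * #L + (m - 1) * #(s \ L) :=
          add_le_add ((card_interedges_self_le L).trans (Nat.mul_le_mul_right _ (by omega))) hrec
      _ = (m - 1) * #s := by rw [← mul_add, add_comm, card_sdiff_add_card_eq_card hLs]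

variable [Fintype V]

lemma sum_card_filter_mem_cliqueFinset (n : ℕ) :
    ∑ v, #{t ∈ G.cliqueFinset n | v ∈ t} = n * #(G.cliqueFinset n) := by
  calc ∑ v, #{t ∈ G.cliqueFinset n | v ∈ t} = ∑ t ∈ G.cliqueFinset n, #{v | v ∈ t} :=
        sum_card_bipartiteAbove_eq_sum_card_bipartiteBelow _
    _ = ∑ t ∈ G.cliqueFinset n, n := sum_congr rfl fun t ht => by
        rw [filter_mem_eq_inter, univ_inter, (mem_cliqueFinset_iff.1 ht).card_eq]
    _ = n * #(G.cliqueFinset n) := by rw [sum_const, smul_eq_mul, mul_comm]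

lemma Adj.card_filter_neighborFinset_adj {u v : V} (huv : G.Adj v u) :
    #{w ∈ G.neighborFinset v | G.Adj u w} = #{t ∈ G.cliqueFinset 3 | v ∈ t ∧ u ∈ t} := by
  have himage : {t ∈ G.cliqueFinset 3 | v ∈ t ∧ u ∈ t} =
      {w ∈ G.neighborFinset v | G.Adj u w}.image (fun w => {v, u, w}) := by
    ext t
    simp only [mem_filter, mem_image, mem_cliqueFinset_iff, mem_neighborFinset]
    constructor
    · rintro ⟨ht, hv, hu⟩
      obtain ⟨w, hw, hwvu⟩ := exists_mem_notMem_of_card_lt_card (s := {v, u}) (t := t)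
        (by rw [ht.card_eq]; exact card_le_two.trans_lt (by norm_num))
      simp only [mem_insert, mem_singleton, not_or] at hwvu
      have hvw := ht.1 hv hw (Ne.symm hwvu.1)
      have huw := ht.1 hu hw (Ne.symm hwvu.2)
      refine ⟨w, ⟨hvw, huw⟩, eq_of_subset_of_card_le ?_ ?_⟩
      · simp [insert_subset_iff, hv, hu, hw]
      · rw [ht.card_eq, (is3Clique_triple_iff.2 ⟨huv, hvw, huw⟩).card_eq]
    · rintro ⟨w, ⟨hvw, huw⟩, rfl⟩
      exact ⟨is3Clique_triple_iff.2 ⟨huv, hvw, huw⟩, by simp, by simp⟩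
  rw [himage, card_image_of_injOn]
  intro w hw w' _ (h : ({v, u, w} : Finset V) = {v, u, w'})
  simp only [coe_filter, mem_neighborFinset, Set.mem_ofPred_eq] at hw
  have : w ∈ ({v, u, w'} : Finset V) := h ▸ by simp
  simp only [mem_insert, mem_singleton] at this
  rcases this with rfl | rfl | rfl
  · exact absurd hw.1 (G.irrefl)
  · exact absurd hw.2 (G.irrefl)
  · rfl

lemma card_interedges_neighborFinset (v : V) :
    #(G.interedges (G.neighborFinset v) (G.neighborFinset v)) =
      2 * #{t ∈ G.cliqueFinset 3 | v ∈ t} := by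
  rw [card_interedges_eq_sum]
  calc ∑ u ∈ G.neighborFinset v, #{w ∈ G.neighborFinset v | G.Adj u w}
        = ∑ u ∈ G.neighborFinset v, #{t ∈ {t ∈ G.cliqueFinset 3 | v ∈ t} | u ∈ t} :=
        sum_congr rfl fun u hu => by
          rw [((G.mem_neighborFinset v u).1 hu).card_filter_neighborFinset_adj, filter_filter]
    _ = ∑ t ∈ {t ∈ G.cliqueFinset 3 | v ∈ t}, #{u ∈ G.neighborFinset v | u ∈ t} :=
        sum_card_bipartiteAbove_eq_sum_card_bipartiteBelow _
    _ = ∑ t ∈ {t ∈ G.cliqueFinset 3 | v ∈ t}, 2 := sum_congr rfl fun t ht => by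
        obtain ⟨ht, hv⟩ := mem_filter.1 ht
        have ht := mem_cliqueFinset_iff.1 ht
        have : {u ∈ G.neighborFinset v | u ∈ t} = t.erase v := by
          ext u
          simp only [mem_filter, mem_neighborFinset, mem_erase]
          exact ⟨fun h => ⟨h.1.ne', h.2⟩, fun h => ⟨ht.1 hv h.2 h.1.symm, h.2⟩⟩
        rw [this, card_erase_of_mem hv, ht.card_eq]
    _ = 2 * #{t ∈ G.cliqueFinset 3 | v ∈ t} := by rw [sum_const, smul_eq_mul, mul_comm]

end DecidableRel

end SimpleGraph

open SimpleGraph Finset in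
theorem stmt_3 (n k : ℕ) (hk : 2 ≤ k) (G : SimpleGraph (Fin n))
    (hfree : ¬ ∃ f : SimpleGraph.cycleGraph (2 * k + 1) →g G, Function.Injective f) :
    3 * (G.cliqueSet 3).ncard ≤ 2 * (k - 1) * G.edgeSet.ncard := by
  classical
  rw [← coe_cliqueFinset, Set.ncard_coe_finset, ← coe_edgeFinset, Set.ncard_coe_finset]
  have hfree' : ¬ cycleGraph (2 * k + 1) ⊑ G := fun ⟨f⟩ => hfree ⟨f.toHom, f.injective⟩
  have hlocal (v : Fin n) : #(G.interedges (G.neighborFinset v) (G.neighborFinset v)) ≤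
      (2 * k - 2) * G.degree v := by
    have := card_interedges_le_of_forall_isPathIn (m := 2 * k - 1) (G.neighborFinset v)
      fun l hl => Nat.le_sub_one_of_lt (length_lt_of_isPathIn_neighborFinset (by omega) hfree' hl)
    rwa [card_neighborFinset_eq_degree, show 2 * k - 1 - 1 = 2 * k - 2 by omega] at this
  refine Nat.le_of_mul_le_mul_left ?_ two_pos
  calc 2 * (3 * #(G.cliqueFinset 3))
      = ∑ v, #(G.interedges (G.neighborFinset v) (G.neighborFinset v)) := by
        simp_rw [card_interedges_neighborFinset, ← mul_sum, sum_card_filter_mem_cliqueFinset]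
    _ ≤ ∑ v, (2 * k - 2) * G.degree v := sum_le_sum fun v _ => hlocal v
    _ = 2 * (2 * (k - 1) * #G.edgeFinset) := by
        rw [← mul_sum, sum_degrees_eq_twice_card_edges, show 2 * k - 2 = 2 * (k - 1) by omega]
        ring
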